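/- Let f : [0,∞) → ℂ be in L² with ∫₀^∞ (1+τ⁴)·|g(τ)|² dτ ≤ r₁² where h(τ) = g(τ)/√(1+τ⁴). If additionally ‖Â h‖_{L²} ≤ δ where (Â h)(τ) = (sinh(μ₀(1-x₀)√τ)/sinh(μ₀√τ))·h(τ), and if for all τ ≥ τ̄ we have |sinh(μ₀√τ)/sinh(μ₀(1-x₀)√τ)|·δ ≤ r₁/√(1+τ̄⁴) — then ‖h‖_{L²} ≤ √2·max(δ·sup_{τ≤τ̄}|sinh(μ₀√τ)/sinh(μ₀(1-x₀)√τ)|, r₁/√(1+τ̄⁴)). -/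

import Mathlib

open Complex Real Set MeasureTheory

/-!
Split the integral of `‖h‖²` at `τbar`. For `τ ≤ τbar` we have `‖h τ‖ = F τ * ‖m τ * h τ‖` with
`F = 1 / |m|`, and `F` is bounded on `[0, τbar]` because `‖sinh z‖ ≤ ‖z‖ cosh ‖z‖` in the numerator
while `Re z ≤ ‖sinh z‖` in the denominator; so the low part is at most `(δ sup F)²` by the data
bound. For `τ > τbar` the weight gives `‖h τ‖² ≤ (1 + τ⁴) ‖g τ‖² / (1 + τbar⁴)`, so the high part
is at most `r₁² / (1 + τbar⁴)` by the source bound. Finally `a² + b² ≤ 2 max(a, b)²`.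
-/

namespace Complex

theorem abs_sinh_re_le_norm_sinh (z : ℂ) : |Real.sinh z.re| ≤ ‖sinh z‖ := by
  have h : |Real.exp z.re - Real.exp (-z.re)| ≤ 2 * ‖sinh z‖ := by
    simpa [← two_sinh, norm_exp] using abs_norm_sub_norm_le (exp z) (exp (-z))
  rw [Real.sinh_eq, abs_div, abs_two]
  linarith

theorem re_le_norm_sinh (z : ℂ) : z.re ≤ ‖sinh z‖ :=
  calc z.re ≤ |z.re| := le_abs_self _
    _ ≤ Real.sinh |z.re| := Real.self_le_sinh_iff.mpr (abs_nonneg _)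
    _ = |Real.sinh z.re| := (Real.abs_sinh _).symm
    _ ≤ ‖sinh z‖ := abs_sinh_re_le_norm_sinh z

theorem norm_sinh_le_norm_mul_cosh_norm (z : ℂ) : ‖sinh z‖ ≤ ‖z‖ * Real.cosh ‖z‖ := by
  refine (hasSum_sinh z).norm_le_of_bounded ((Real.hasSum_cosh ‖z‖).mul_left ‖z‖) fun n => ?_
  rw [norm_div, norm_pow, norm_natCast, pow_succ', mul_div_assoc]
  gcongr
  omega

end Complex

section SinhRatio

variable {μ : ℂ} {c t : ℝ}

theorem norm_sinh_mul_pos (hμ : 0 < μ.re) (ht : 0 < t) : 0 < ‖sinh (μ * t)‖ :=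
  (mul_pos hμ ht).trans_le (by simpa using re_le_norm_sinh (μ * t))

theorem norm_sinh_div_norm_sinh_le (hμ : 0 < μ.re) (hc : 0 < c) (ht : 0 < t) {T : ℝ}
    (htT : t ≤ T) :
    ‖sinh (μ * t)‖ / ‖sinh (μ * c * t)‖ ≤ ‖μ‖ * Real.cosh (‖μ‖ * T) / (μ.re * c) := by
  have hnum : ‖sinh (μ * t)‖ ≤ ‖μ‖ * Real.cosh (‖μ‖ * T) * t :=
    calc ‖sinh (μ * t)‖ ≤ ‖μ * t‖ * Real.cosh ‖μ * t‖ := norm_sinh_le_norm_mul_cosh_norm _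
      _ = ‖μ‖ * Real.cosh (‖μ‖ * t) * t := by
        rw [norm_mul, norm_real, Real.norm_of_nonneg ht.le]; ring
      _ ≤ ‖μ‖ * Real.cosh (‖μ‖ * T) * t := by
        gcongr
        rw [Real.cosh_le_cosh, abs_of_nonneg (by positivity),
          abs_of_nonneg (mul_nonneg (norm_nonneg μ) (ht.le.trans htT))]
        gcongr
  have hden : μ.re * c * t ≤ ‖sinh (μ * c * t)‖ := by simpa using re_le_norm_sinh (μ * c * t)
  calc ‖sinh (μ * t)‖ / ‖sinh (μ * c * t)‖
      ≤ ‖μ‖ * Real.cosh (‖μ‖ * T) * t / (μ.re * c * t) := by gcongr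
    _ = ‖μ‖ * Real.cosh (‖μ‖ * T) / (μ.re * c) := mul_div_mul_right _ _ ht.ne'

theorem bddAbove_norm_sinh_div_norm_sinh_sqrt (hμ : 0 < μ.re) (hc : 0 < c) (T : ℝ) :
    BddAbove ((fun τ => ‖sinh (μ * √τ)‖ / ‖sinh (μ * c * √τ)‖) '' Icc 0 T) := by
  refine ⟨‖μ‖ * Real.cosh (‖μ‖ * √T) / (μ.re * c), ?_⟩
  rintro _ ⟨τ, ⟨hτ, hτT⟩, rfl⟩
  rcases hτ.eq_or_lt with rfl | hτ
  · simp only [Real.sqrt_zero, ofReal_zero, mul_zero, Complex.sinh_zero, norm_zero, zero_div]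
    positivity
  · exact norm_sinh_div_norm_sinh_le hμ hc (Real.sqrt_pos.mpr hτ) (Real.sqrt_le_sqrt hτT)

theorem norm_eq_norm_sinh_div_mul_norm (hμ : 0 < μ.re) (hc : 0 < c) (ht : 0 < t) (x : ℂ) :
    ‖x‖ = ‖sinh (μ * t)‖ / ‖sinh (μ * c * t)‖ * ‖sinh (μ * c * t) / sinh (μ * t) * x‖ := by
  have hμc : 0 < (μ * c).re := by simpa using mul_pos hμ hc
  rw [norm_mul, norm_div, ← mul_assoc, div_mul_div_comm, mul_comm ‖sinh (μ * t)‖,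
    div_self (mul_pos (norm_sinh_mul_pos hμc ht) (norm_sinh_mul_pos hμ ht)).ne', one_mul]

end SinhRatio

theorem setIntegral_le_mul_setIntegral_of_le_mul {α : Type*} [MeasurableSpace α] {μ : Measure α}
    {s t : Set α} {f g : α → ℝ} {c : ℝ} (hs : MeasurableSet s) (hst : s ⊆ t)
    (hf : IntegrableOn f s μ) (hg : IntegrableOn g t μ) (hg₀ : 0 ≤ g) (hc : 0 ≤ c)
    (hfg : ∀ x ∈ s, f x ≤ c * g x) :
    ∫ x in s, f x ∂μ ≤ c * ∫ x in t, g x ∂μ :=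
  calc ∫ x in s, f x ∂μ ≤ ∫ x in s, c * g x ∂μ :=
        setIntegral_mono_on hf ((hg.mono_set hst).const_mul c) hs hfg
    _ = c * ∫ x in s, g x ∂μ := integral_const_mul c g
    _ ≤ c * ∫ x in t, g x ∂μ :=
        mul_le_mul_of_nonneg_left (setIntegral_mono_set hg (.of_forall hg₀) hst.eventuallyLE) hc

theorem sq_norm_div_sqrt_le {v w : ℝ} (hv : 0 < v) (hvw : v ≤ w) (hw : 1 ≤ w) (z : ℂ) :
    ‖z / √w‖ ^ 2 ≤ v⁻¹ * (w * ‖z‖ ^ 2) := by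
  rw [norm_div, norm_real, Real.norm_of_nonneg (Real.sqrt_nonneg w), div_pow,
    Real.sq_sqrt (by linarith), inv_mul_eq_div, div_le_div_iff₀ (by linarith) hv]
  have : v ≤ w * w := by nlinarith
  nlinarith [mul_le_mul_of_nonneg_left this (sq_nonneg ‖z‖)]

theorem sqrt_add_le_sqrt_two_mul_max {A B a b : ℝ} (ha : 0 ≤ a) (hb : 0 ≤ b) (hA : A ≤ a ^ 2)
    (hB : B ≤ b ^ 2) : √(A + B) ≤ √2 * max a b := by
  have hmax : a ^ 2 + b ^ 2 ≤ 2 * max a b ^ 2 := by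
    nlinarith [pow_le_pow_left₀ ha (le_max_left a b) 2, pow_le_pow_left₀ hb (le_max_right a b) 2]
  rw [← Real.sqrt_sq (le_max_of_le_left ha), ← Real.sqrt_mul zero_le_two]
  exact Real.sqrt_le_sqrt (by linarith)

theorem sqrt_setIntegral_Ioi_le_sqrt_two_mul_max {f : ℝ → ℝ} {T a b : ℝ} (hT : 0 ≤ T)
    (hf : IntegrableOn f (Ioi 0)) (ha : 0 ≤ a) (hb : 0 ≤ b)
    (hlow : ∫ τ in Ioc 0 T, f τ ≤ a ^ 2) (hhigh : ∫ τ in Ioi T, f τ ≤ b ^ 2) :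
    √(∫ τ in Ioi 0, f τ) ≤ √2 * max a b := by
  rw [← Ioc_union_Ioi_eq_Ioi hT, setIntegral_union (Ioc_disjoint_Ioi le_rfl) measurableSet_Ioi
    (hf.mono_set Ioc_subset_Ioi_self) (hf.mono_set (Ioi_subset_Ioi hT))]
  exact sqrt_add_le_sqrt_two_mul_max ha hb hlow hhigh

theorem stmt_9_general (μ₀ : ℂ) (hμ₀ : μ₀ = (1 + Complex.I) / Real.sqrt 2)
    (x₀ : ℝ) (hx₀ : x₀ ∈ Set.Ioo (0:ℝ) 1)
    (r₁ δ τbar : ℝ) (hr₁ : 0 < r₁) (hδ : 0 < δ) (hτbar : 0 < τbar)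
    (g h : ℝ → ℂ) (hgh : ∀ τ, h τ = g τ / Real.sqrt (1 + τ^4))
    (m : ℝ → ℂ)
    (hm : ∀ τ, m τ = Complex.sinh (μ₀ * (1 - x₀) * Real.sqrt τ) / Complex.sinh (μ₀ * Real.sqrt τ))
    (hint₁ : IntegrableOn (fun τ => (1 + τ^4) * ‖g τ‖^2) (Set.Ioi 0))
    (hint₂ : IntegrableOn (fun τ => ‖m τ * h τ‖^2) (Set.Ioi 0))
    (hint₃ : IntegrableOn (fun τ => ‖h τ‖^2) (Set.Ioi 0))
    (hsource : ∫ τ in Set.Ioi (0:ℝ), (1 + τ^4) * ‖g τ‖^2 ≤ r₁^2)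
    (hdata : ∫ τ in Set.Ioi (0:ℝ), ‖m τ * h τ‖^2 ≤ δ^2) :
    Real.sqrt (∫ τ in Set.Ioi (0:ℝ), ‖h τ‖^2) ≤
      Real.sqrt 2 * max
        (δ * sSup ((fun τ => ‖Complex.sinh (μ₀ * Real.sqrt τ)‖ /
          ‖Complex.sinh (μ₀ * (1 - x₀) * Real.sqrt τ)‖) '' Set.Icc 0 τbar))
        (r₁ / Real.sqrt (1 + τbar^4)) := by
  have hμ₀re : 0 < μ₀.re := by rw [hμ₀]; simp
  have hc : 0 < 1 - x₀ := sub_pos.mpr hx₀.2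
  have hcast : ((1 - x₀ : ℝ) : ℂ) = 1 - x₀ := by push_cast; rfl
  have hbdd := bddAbove_norm_sinh_div_norm_sinh_sqrt hμ₀re hc τbar
  rw [hcast] at hbdd
  set S := sSup ((fun τ => ‖sinh (μ₀ * √τ)‖ / ‖sinh (μ₀ * (1 - x₀) * √τ)‖) '' Icc 0 τbar)
  have hlow : ∫ τ in Ioc 0 τbar, ‖h τ‖ ^ 2 ≤ S ^ 2 * ∫ τ in Ioi 0, ‖m τ * h τ‖ ^ 2 := by
    refine setIntegral_le_mul_setIntegral_of_le_mul measurableSet_Ioc Ioc_subset_Ioi_self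
      (hint₃.mono_set Ioc_subset_Ioi_self) hint₂ (fun _ => by positivity) (by positivity) ?_
    rintro τ ⟨hτ, hτT⟩
    rw [norm_eq_norm_sinh_div_mul_norm hμ₀re hc (Real.sqrt_pos.2 hτ) (h τ), hm, hcast, mul_pow]
    gcongr
    exact le_csSup hbdd ⟨τ, ⟨hτ.le, hτT⟩, rfl⟩
  have hhigh : ∫ τ in Ioi τbar, ‖h τ‖ ^ 2 ≤
      (1 + τbar ^ 4)⁻¹ * ∫ τ in Ioi 0, (1 + τ ^ 4) * ‖g τ‖ ^ 2 := by
    refine setIntegral_le_mul_setIntegral_of_le_mul measurableSet_Ioi (Ioi_subset_Ioi hτbar.le)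
      (hint₃.mono_set (Ioi_subset_Ioi hτbar.le)) hint₁ (fun _ => by positivity) (by positivity) ?_
    intro τ hτ
    rw [hgh]
    exact sq_norm_div_sqrt_le (by positivity) (by gcongr; exact hτ.le) (le_add_of_nonneg_right (by positivity)) _
  refine sqrt_setIntegral_Ioi_le_sqrt_two_mul_max hτbar.le hint₃ ?_ (by positivity) ?_ ?_
  · exact mul_nonneg hδ.le (Real.sSup_nonneg (by rintro _ ⟨τ, -, rfl⟩; positivity))
  · calc _ ≤ S ^ 2 * δ ^ 2 := hlow.trans (by gcongr)
      _ = (δ * S) ^ 2 := by ring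
  · calc _ ≤ (1 + τbar ^ 4)⁻¹ * r₁ ^ 2 := hhigh.trans (by gcongr)
      _ = _ := by rw [div_pow, Real.sq_sqrt (by positivity)]; ring

theorem stmt_9 (μ₀ : ℂ) (hμ₀ : μ₀ = (1 + Complex.I) / Real.sqrt 2)
    (x₀ : ℝ) (hx₀ : x₀ ∈ Set.Ioo (0:ℝ) 1)
    (r₁ δ τbar : ℝ) (hr₁ : 0 < r₁) (hδ : 0 < δ) (hτbar : 0 < τbar)
    (g h : ℝ → ℂ) (hgh : ∀ τ, h τ = g τ / Real.sqrt (1 + τ^4))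
    (m : ℝ → ℂ)
    (hm : ∀ τ, m τ = Complex.sinh (μ₀ * (1 - x₀) * Real.sqrt τ) / Complex.sinh (μ₀ * Real.sqrt τ))
    (hint₁ : IntegrableOn (fun τ => (1 + τ^4) * ‖g τ‖^2) (Set.Ioi 0))
    (hint₂ : IntegrableOn (fun τ => ‖m τ * h τ‖^2) (Set.Ioi 0))
    (hint₃ : IntegrableOn (fun τ => ‖h τ‖^2) (Set.Ioi 0))
    (hsource : ∫ τ in Set.Ioi (0:ℝ), (1 + τ^4) * ‖g τ‖^2 ≤ r₁^2)
    (hdata : ∫ τ in Set.Ioi (0:ℝ), ‖m τ * h τ‖^2 ≤ δ^2)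
    (hhigh : ∀ τ ≥ τbar,
      ‖Complex.sinh (μ₀ * Real.sqrt τ)‖ /
        ‖Complex.sinh (μ₀ * (1 - x₀) * Real.sqrt τ)‖ * δ ≤
      r₁ / Real.sqrt (1 + τbar^4)) :
    Real.sqrt (∫ τ in Set.Ioi (0:ℝ), ‖h τ‖^2) ≤
      Real.sqrt 2 * max
        (δ * sSup ((fun τ => ‖Complex.sinh (μ₀ * Real.sqrt τ)‖ /
          ‖Complex.sinh (μ₀ * (1 - x₀) * Real.sqrt τ)‖) '' Set.Icc 0 τbar))
        (r₁ / Real.sqrt (1 + τbar^4)) :=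
  stmt_9_general μ₀ hμ₀ x₀ hx₀ r₁ δ τbar hr₁ hδ hτbar g h hgh m hm hint₁ hint₂ hint₃ hsource hdata
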